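/- The number of connected chord diagrams with n chords having exactly one terminal chord is (2n-3)!! (for n ≥ 1, with the convention (-1)!! = 1). -/

import Mathlib

open scoped Classical

namespace ChordStmt

/-- Chord `p` has an outgoing edge to chord `q` in the oriented intersection graph. -/
def crosses (p q : ℕ × ℕ) : Prop := p.1 < q.1 ∧ q.1 < p.2 ∧ p.2 < q.2

/-- A finite set of pairs `(a,b)` with `a < b` and all endpoints distinct. -/
def IsMatching (D : Finset (ℕ × ℕ)) : Prop :=
  (∀ p ∈ D, p.1 < p.2) ∧
  ∀ p ∈ D, ∀ q ∈ D, p ≠ q → p.1 ≠ q.1 ∧ p.1 ≠ q.2 ∧ p.2 ≠ q.1 ∧ p.2 ≠ q.2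

def points (D : Finset (ℕ × ℕ)) : Finset ℕ := D.biUnion fun p => {p.1, p.2}

/-- A chord diagram with `n` chords: a perfect matching of `{1, …, 2n}`. -/
def IsDiagramOn (n : ℕ) (D : Finset (ℕ × ℕ)) : Prop :=
  IsMatching D ∧ points D = Finset.Icc 1 (2 * n)

def Step (D : Finset (ℕ × ℕ)) (a b : ℕ × ℕ) : Prop :=
  a ∈ D ∧ b ∈ D ∧ (crosses a b ∨ crosses b a)

def Reach (D : Finset (ℕ × ℕ)) (a b : ℕ × ℕ) : Prop :=
  Relation.ReflTransGen (Step D) a b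

/-- The diagram is connected (its intersection graph is connected). -/
def ConnectedDiagram (D : Finset (ℕ × ℕ)) : Prop :=
  D.Nonempty ∧ ∀ p ∈ D, ∀ q ∈ D, Reach D p q

/-- A chord is terminal if it has no outgoing edge in the oriented intersection graph. -/
def IsTerminal (D : Finset (ℕ × ℕ)) (p : ℕ × ℕ) : Prop :=
  p ∈ D ∧ ∀ q ∈ D, ¬ crosses p q

/-- The number of connected chord diagrams with `n` chords. -/
noncomputable def c (n : ℕ) : ℕ :=
  Set.ncard {D : Finset (ℕ × ℕ) | IsDiagramOn n D ∧ ConnectedDiagram D}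

/-- The root chord: the chord with the smallest first endpoint. -/
noncomputable def rootChord (D : Finset (ℕ × ℕ)) : ℕ × ℕ :=
  if h : ∃ p ∈ D, ∀ q ∈ D, p.1 ≤ q.1 then h.choose else (0, 0)

lemma rootChord_mem {D : Finset (ℕ × ℕ)} (h : D.Nonempty) : rootChord D ∈ D := by
  have hex : ∃ p ∈ D, ∀ q ∈ D, p.1 ≤ q.1 := by
    obtain ⟨p, hp, hmin⟩ := D.exists_min_image Prod.fst h
    exact ⟨p, hp, hmin⟩
  rw [rootChord, dif_pos hex]
  exact hex.choose_spec.1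

/-- The connected component of the chord `p` in the diagram `D`. -/
noncomputable def componentOf (D : Finset (ℕ × ℕ)) (p : ℕ × ℕ) : Finset (ℕ × ℕ) :=
  D.filter fun q => Reach D p q

/-- The list of chords of `D` in intersection order: the root chord first, then
recursively the chords of the connected components of `D` minus the root chord,
components ordered by first vertex (equivalently: repeatedly split off the component
of the current root chord). -/
noncomputable def interOrder (D : Finset (ℕ × ℕ)) : List (ℕ × ℕ) :=
  if h : D.Nonempty then
    if hK : componentOf D (rootChord D) = D then
      rootChord D :: interOrder (D.erase (rootChord D))
    else
      interOrder (componentOf D (rootChord D)) ++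
        interOrder (D \ componentOf D (rootChord D))
  else []
termination_by D.card
decreasing_by
  · exact Finset.card_erase_lt_of_mem (rootChord_mem h)
  · exact Finset.card_lt_card
      (Finset.ssubset_iff_subset_ne.mpr ⟨Finset.filter_subset _ _, hK⟩)
  · exact Finset.card_lt_card
      (Finset.sdiff_ssubset (Finset.filter_subset _ _)
        ⟨rootChord D, Finset.mem_filter.mpr ⟨rootChord_mem h, Relation.ReflTransGen.refl⟩⟩)

/-- `b(C)`: the (1-based) index of the first terminal chord in the intersection order. -/
noncomputable def bIndex (D : Finset (ℕ × ℕ)) : ℕ :=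
  (interOrder D).findIdx (fun p => decide (IsTerminal D p)) + 1

/-- `b_{n,k}`: the number of connected chord diagrams `C` with `n` chords and `b(C) ≥ n - k`. -/
noncomputable def bCount (n k : ℕ) : ℕ :=
  Set.ncard {D : Finset (ℕ × ℕ) |
    IsDiagramOn n D ∧ ConnectedDiagram D ∧ n - k ≤ bIndex D}

/-- The terminal chords of `D` are exactly the last `k` chords in intersection order. -/
def TerminalExactlyLast (D : Finset (ℕ × ℕ)) (k : ℕ) : Prop :=
  ∀ i : Fin (interOrder D).length,
    IsTerminal D ((interOrder D).get i) ↔ (interOrder D).length - k ≤ (i : ℕ)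

/-- `o_{n,k}`: connected diagrams with `n` chords whose terminal chords are exactly
the last `k` chords in intersection order. -/
noncomputable def oCount (n k : ℕ) : ℕ :=
  Set.ncard {D : Finset (ℕ × ℕ) |
    IsDiagramOn n D ∧ ConnectedDiagram D ∧ TerminalExactlyLast D k}

end ChordStmt

/-!
In a chord diagram on `{1, …, 2n}` the chord ending at `2n` is always terminal, so the diagram
has exactly one terminal chord iff every other chord has an outgoing edge. Such a diagram is
automatically connected: outgoing edges increase the right endpoint, so from every chord they lead
to the chord ending at `2n`.

For `n ≥ 2` the root chord of such a diagram is `(1, m)` with `3 ≤ m ≤ 2n - 1`, and removing it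
(and closing up the gaps) leaves a diagram of the same kind with `n - 1` chords. Conversely, every
such `m` and every such smaller diagram arise, exactly once. Hence the count for `n` is `2n - 3`
times the count for `n - 1`, and there is one diagram with a single chord.
-/

namespace ChordStmt

def OnlyTopTerminal (n : ℕ) (D : Finset (ℕ × ℕ)) : Prop :=
  IsDiagramOn n D ∧ ∀ p ∈ D, p.2 ≠ 2 * n → ∃ q ∈ D, crosses p q

section Diagram

variable {n : ℕ} {D : Finset (ℕ × ℕ)}

lemma mem_points {x : ℕ} : x ∈ points D ↔ ∃ p ∈ D, x = p.1 ∨ x = p.2 := by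
  simp [points]

lemma points_insert (a : ℕ × ℕ) : points (insert a D) = insert a.1 (insert a.2 (points D)) := by
  ext x
  simp only [mem_points, Finset.mem_insert, exists_eq_or_imp, or_assoc]

lemma IsMatching.mono {D' : Finset (ℕ × ℕ)} (h : IsMatching D) (hD' : D' ⊆ D) : IsMatching D' :=
  ⟨fun p hp => h.1 p (hD' hp), fun p hp q hq => h.2 p (hD' hp) q (hD' hq)⟩

lemma IsMatching.eq_of_snd_eq (h : IsMatching D) {p q : ℕ × ℕ} (hp : p ∈ D) (hq : q ∈ D)
    (he : p.2 = q.2) : p = q := by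
  by_contra hne
  exact (h.2 p hp q hq hne).2.2.2 he

lemma IsMatching.eq_of_fst_eq (h : IsMatching D) {p q : ℕ × ℕ} (hp : p ∈ D) (hq : q ∈ D)
    (he : p.1 = q.1) : p = q := by
  by_contra hne
  exact (h.2 p hp q hq hne).1 he

lemma isMatching_insert_iff {a : ℕ × ℕ} (ha : a ∉ D) :
    IsMatching (insert a D) ↔
      a.1 < a.2 ∧ IsMatching D ∧ a.1 ∉ points D ∧ a.2 ∉ points D := by
  constructor
  · intro h
    refine ⟨h.1 a (D.mem_insert_self a), h.mono (D.subset_insert a), ?_, ?_⟩ <;>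
    · intro hx
      obtain ⟨q, hq, hx⟩ := mem_points.1 hx
      have := h.2 a (D.mem_insert_self a) q (D.mem_insert_of_mem hq) (fun e => ha (e ▸ hq))
      omega
  · rintro ⟨ha12, hD, h1, h2⟩
    have hsep (q) (hq : q ∈ D) : a.1 ≠ q.1 ∧ a.1 ≠ q.2 ∧ a.2 ≠ q.1 ∧ a.2 ≠ q.2 :=
      ⟨fun e => h1 (mem_points.2 ⟨q, hq, .inl e⟩), fun e => h1 (mem_points.2 ⟨q, hq, .inr e⟩),
        fun e => h2 (mem_points.2 ⟨q, hq, .inl e⟩), fun e => h2 (mem_points.2 ⟨q, hq, .inr e⟩)⟩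
    simp only [IsMatching, Finset.forall_mem_insert]
    refine ⟨⟨ha12, hD.1⟩, ⟨fun h => absurd rfl h, fun q hq _ => hsep q hq⟩,
      fun p hp => ⟨fun _ => ?_, hD.2 p hp⟩⟩
    have := hsep p hp
    omega

lemma IsDiagramOn.bounds (h : IsDiagramOn n D) {p : ℕ × ℕ} (hp : p ∈ D) :
    1 ≤ p.1 ∧ p.1 < p.2 ∧ p.2 ≤ 2 * n := by
  have h1 : p.1 ∈ points D := mem_points.2 ⟨p, hp, Or.inl rfl⟩
  have h2 : p.2 ∈ points D := mem_points.2 ⟨p, hp, Or.inr rfl⟩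
  rw [h.2, Finset.mem_Icc] at h1 h2
  exact ⟨h1.1, h.1.1 p hp, h2.2⟩

lemma IsDiagramOn.exists_mem_of_mem_Icc (h : IsDiagramOn n D) {x : ℕ} (hx : 1 ≤ x)
    (hx' : x ≤ 2 * n) : ∃ p ∈ D, x = p.1 ∨ x = p.2 :=
  mem_points.1 (h.2 ▸ Finset.mem_Icc.2 ⟨hx, hx'⟩)

lemma IsDiagramOn.exists_snd_eq (h : IsDiagramOn n D) (hn : 1 ≤ n) : ∃ t ∈ D, t.2 = 2 * n := by
  obtain ⟨t, ht, h1 | h2⟩ := h.exists_mem_of_mem_Icc (x := 2 * n) (by omega) le_rfl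
  · have := h.bounds ht; omega
  · exact ⟨t, ht, h2.symm⟩

lemma IsDiagramOn.exists_fst_eq_one (h : IsDiagramOn n D) (hn : 1 ≤ n) : ∃ m, (1, m) ∈ D := by
  obtain ⟨p, hp, h1 | h2⟩ := h.exists_mem_of_mem_Icc (x := 1) le_rfl (by omega)
  · exact ⟨p.2, by rwa [h1]⟩
  · have := h.bounds hp; omega

lemma IsDiagramOn.isTerminal_of_snd_eq (h : IsDiagramOn n D) {t : ℕ × ℕ} (ht : t ∈ D)
    (ht2 : t.2 = 2 * n) : IsTerminal D t :=
  ⟨ht, fun q hq hc => by have := h.bounds hq; have := hc.2.2; omega⟩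

instance : Std.Symm (Step D) := ⟨fun _ _ ⟨ha, hb, hc⟩ => ⟨hb, ha, hc.symm⟩⟩

lemma OnlyTopTerminal.reach (h : OnlyTopTerminal n D) {t : ℕ × ℕ} (ht : t ∈ D)
    (ht2 : t.2 = 2 * n) {p : ℕ × ℕ} (hp : p ∈ D) : Reach D p t := by
  induction hk : 2 * n - p.2 using Nat.strong_induction_on generalizing p with
  | _ k ih =>
    by_cases hp2 : p.2 = 2 * n
    · rw [h.1.1.eq_of_snd_eq hp ht (hp2.trans ht2.symm)]
      exact .refl
    · obtain ⟨q, hq, hc⟩ := h.2 p hp hp2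
      have := h.1.bounds hq
      exact .head ⟨hp, hq, .inl hc⟩ (ih _ (by have := hc.2.2; omega) hq rfl)

lemma OnlyTopTerminal.connectedDiagram (h : OnlyTopTerminal n D) (hn : 1 ≤ n) :
    ConnectedDiagram D := by
  obtain ⟨t, ht, ht2⟩ := h.1.exists_snd_eq hn
  exact ⟨⟨t, ht⟩, fun p hp q hq =>
    (h.reach ht ht2 hp).trans (Std.Symm.symm _ _ (h.reach ht ht2 hq))⟩

lemma existsUnique_isTerminal_iff (h : IsDiagramOn n D) (hn : 1 ≤ n) :
    (∃! p, IsTerminal D p) ↔ ∀ p ∈ D, p.2 ≠ 2 * n → ∃ q ∈ D, crosses p q := by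
  obtain ⟨t, ht, ht2⟩ := h.exists_snd_eq hn
  have htt := h.isTerminal_of_snd_eq ht ht2
  constructor
  · rintro ⟨_, _, huniq⟩ p hp hp2
    by_contra! hno
    exact hp2 ((huniq p ⟨hp, hno⟩).trans (huniq t htt).symm ▸ ht2)
  · intro hcr
    refine ⟨t, htt, fun p ⟨hp, hno⟩ => h.1.eq_of_snd_eq hp ht ?_⟩
    by_contra hp2
    obtain ⟨q, hq, hc⟩ := hcr p hp (ht2 ▸ hp2)
    exact hno q hq hc

lemma setOf_existsUnique_isTerminal (hn : 1 ≤ n) :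
    {D : Finset (ℕ × ℕ) | IsDiagramOn n D ∧ ConnectedDiagram D ∧ ∃! p, IsTerminal D p}
      = {D | OnlyTopTerminal n D} := by
  refine Set.ext fun D => ⟨fun ⟨hD, _, hu⟩ => ⟨hD, (existsUnique_isTerminal_iff hD hn).1 hu⟩,
    fun h => ⟨h.1, h.connectedDiagram hn, (existsUnique_isTerminal_iff h.1 hn).2 h.2⟩⟩

end Diagram

section Relabel

variable {f : ℕ → ℕ} {D : Finset (ℕ × ℕ)}

lemma points_image_prodMap : points (D.image (Prod.map f f)) = (points D).image f := by
  ext x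
  simp only [mem_points, Finset.mem_image, Prod.exists]
  aesop

lemma crosses_prodMap_iff (hf : StrictMono f) {p q : ℕ × ℕ} :
    crosses (Prod.map f f p) (Prod.map f f q) ↔ crosses p q := by
  simp [crosses, hf.lt_iff_lt]

lemma isMatching_image_prodMap_iff (hf : StrictMono f) :
    IsMatching (D.image (Prod.map f f)) ↔ IsMatching D := by
  have hinj : Function.Injective (Prod.map f f) := hf.injective.prodMap hf.injective
  simp only [IsMatching, Finset.forall_mem_image, Prod.map_fst, Prod.map_snd, hf.lt_iff_lt,
    hinj.ne_iff, hf.injective.ne_iff]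

end Relabel

/-- The relabelling of points when the chord `(1, m)` is added in front of a diagram: for
`2 ≤ m` it is the increasing bijection of `ℕ` onto `ℕ \ {0, m}`, so it maps `{1, …, 2N}` onto
`{2, …, 2N + 2} \ {m}`. -/
def rootShift (m y : ℕ) : ℕ := if y + 1 < m then y + 1 else y + 2

def rootUnshift (m x : ℕ) : ℕ := if m < x then x - 2 else x - 1

def addRoot (m : ℕ) (M : Finset (ℕ × ℕ)) : Finset (ℕ × ℕ) :=
  insert (1, m) (M.image (Prod.map (rootShift m) (rootShift m)))

def removeRoot (m : ℕ) (D : Finset (ℕ × ℕ)) : Finset (ℕ × ℕ) :=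
  (D.erase (1, m)).image (Prod.map (rootUnshift m) (rootUnshift m))

section RootShift

variable {m N : ℕ}

lemma rootShift_strictMono (m : ℕ) : StrictMono (rootShift m) := by
  intro x y h
  unfold rootShift
  split_ifs <;> omega

lemma rootShift_ne (m y : ℕ) : rootShift m y ≠ m := by
  unfold rootShift
  split_ifs <;> omega

lemma lt_rootShift (m y : ℕ) : y < rootShift m y := by
  unfold rootShift
  split_ifs <;> omega

lemma rootShift_zero (hm : 2 ≤ m) : rootShift m 0 = 1 := by
  simp [rootShift, show 1 < m by omega]

lemma rootShift_two_mul (hm : m ≤ 2 * N + 1) : rootShift m (2 * N) = 2 * N + 2 := by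
  simp [rootShift, show ¬ 2 * N + 1 < m by omega]

lemma rootUnshift_rootShift (m y : ℕ) : rootUnshift m (rootShift m y) = y := by
  unfold rootShift rootUnshift
  split_ifs <;> omega

lemma rootShift_rootUnshift (hm : 2 ≤ m) {x : ℕ} (hx : x ≠ 0) (hxm : x ≠ m) :
    rootShift m (rootUnshift m x) = x := by
  unfold rootShift rootUnshift
  split_ifs <;> omega

lemma one_mem_image_rootShift_iff (hm : 2 ≤ m) {P : Finset ℕ} :
    1 ∈ P.image (rootShift m) ↔ 0 ∈ P := by
  rw [← rootShift_zero hm, (rootShift_strictMono m).injective.mem_finset_image]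

lemma insert_insert_image_rootShift_Icc (hm2 : 2 ≤ m) (hm : m ≤ 2 * N + 2) :
    insert 1 (insert m ((Finset.Icc 1 (2 * N)).image (rootShift m))) =
      Finset.Icc 1 (2 * N + 2) := by
  ext x
  simp only [Finset.mem_insert, Finset.mem_image, Finset.mem_Icc]
  constructor
  · rintro (rfl | rfl | ⟨y, hy, rfl⟩)
    · omega
    · omega
    · unfold rootShift
      split_ifs <;> omega
  · intro hx
    by_cases h1 : x = 1
    · exact .inl h1
    by_cases h2 : x = m
    · exact .inr (.inl h2)
    refine .inr (.inr ⟨rootUnshift m x, ?_, rootShift_rootUnshift hm2 (by omega) h2⟩)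
    unfold rootUnshift
    split_ifs <;> omega

lemma insert_insert_image_rootShift_eq_Icc_iff (hm2 : 2 ≤ m) (hm : m ≤ 2 * N + 2)
    {P : Finset ℕ} (h0 : 0 ∉ P) :
    insert 1 (insert m (P.image (rootShift m))) = Finset.Icc 1 (2 * N + 2) ↔
      P = Finset.Icc 1 (2 * N) := by
  have herase (Q : Finset ℕ) (hQ : 0 ∉ Q) :
      ((insert 1 (insert m (Q.image (rootShift m)))).erase 1).erase m = Q.image (rootShift m) := by
    rw [Finset.erase_insert (by simp [one_mem_image_rootShift_iff hm2, hQ]; omega),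
      Finset.erase_insert (by simp [rootShift_ne])]
  rw [← insert_insert_image_rootShift_Icc hm2 hm]
  refine ⟨fun h => Finset.image_injective (rootShift_strictMono m).injective ?_, fun h => h ▸ rfl⟩
  rw [← herase P h0, h, herase _ (by simp)]

end RootShift

section AddRoot

variable {m N : ℕ} {M : Finset (ℕ × ℕ)}

lemma isDiagramOn_addRoot_iff (hm2 : 2 ≤ m) (hm : m ≤ 2 * N + 2) :
    IsDiagramOn (N + 1) (addRoot m M) ↔ IsDiagramOn N M := by
  have hroot : (1, m) ∉ M.image (Prod.map (rootShift m) (rootShift m)) := by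
    simp [rootShift_ne]
  have hm_not : m ∉ (points M).image (rootShift m) := by simp [rootShift_ne]
  rw [IsDiagramOn, IsDiagramOn, addRoot, isMatching_insert_iff hroot,
    isMatching_image_prodMap_iff (rootShift_strictMono m), points_insert, points_image_prodMap,
    show 2 * (N + 1) = 2 * N + 2 by ring]
  dsimp only
  rw [one_mem_image_rootShift_iff hm2]
  constructor
  · rintro ⟨⟨-, hM, h0, -⟩, hpts⟩
    exact ⟨hM, (insert_insert_image_rootShift_eq_Icc_iff hm2 hm h0).1 hpts⟩
  · rintro ⟨hM, hpts⟩
    have h0 : 0 ∉ points M := by simp [hpts]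
    exact ⟨⟨by omega, hM, h0, hm_not⟩,
      (insert_insert_image_rootShift_eq_Icc_iff hm2 hm h0).2 hpts⟩

/-- The chord through `m - 2` starts at or before `m - 2` and, unless it ends there, ends after
it; if it ends there, its outgoing neighbour starts before and ends after `m - 2`. -/
lemma OnlyTopTerminal.exists_crosses_root (hM : OnlyTopTerminal N M) (hm3 : 3 ≤ m)
    (hm : m ≤ 2 * N + 1) : ∃ q ∈ M, crosses (1, m) (Prod.map (rootShift m) (rootShift m) q) := by
  have hcross {q : ℕ × ℕ} (hq : q ∈ M) (h1 : q.1 + 2 ≤ m) (h2 : m ≤ q.2 + 1) :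
      crosses (1, m) (Prod.map (rootShift m) (rootShift m) q) := by
    have := hM.1.bounds hq
    simp only [crosses, Prod.map_fst, Prod.map_snd, rootShift]
    split_ifs <;> omega
  obtain ⟨r, hr, h | h⟩ := hM.1.exists_mem_of_mem_Icc (x := m - 2) (by omega) (by omega)
  · have := hM.1.bounds hr
    exact ⟨r, hr, hcross hr (by omega) (by omega)⟩
  · obtain ⟨s, hs, hc⟩ := hM.2 r hr (by omega)
    exact ⟨s, hs, hcross hs (by have := hc.2.1; omega) (by have := hc.2.2; omega)⟩

lemma onlyTopTerminal_addRoot_iff (hm3 : 3 ≤ m) (hm : m ≤ 2 * N + 1) :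
    OnlyTopTerminal (N + 1) (addRoot m M) ↔ OnlyTopTerminal N M := by
  have htop (p : ℕ × ℕ) : rootShift m p.2 ≠ 2 * (N + 1) ↔ p.2 ≠ 2 * N := by
    rw [show 2 * (N + 1) = 2 * N + 2 by ring, ← rootShift_two_mul hm,
      (rootShift_strictMono m).injective.ne_iff]
  have hnot (p : ℕ × ℕ) : ¬ crosses (Prod.map (rootShift m) (rootShift m) p) (1, m) :=
    fun h => by have : rootShift m p.1 < 1 := h.1; have := lt_rootShift m p.1; omega
  rw [OnlyTopTerminal, OnlyTopTerminal, isDiagramOn_addRoot_iff (by omega) (by omega)]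
  refine and_congr_right fun hM => ?_
  simp only [addRoot, Finset.forall_mem_insert, Finset.forall_mem_image, Finset.exists_mem_insert,
    Finset.exists_mem_image, crosses_prodMap_iff (rootShift_strictMono m), Prod.map_snd, htop]
  constructor
  · rintro ⟨-, hold⟩ p hp hp2
    exact (hold hp hp2).resolve_left (hnot p)
  · intro hcr
    exact ⟨fun _ => .inr (OnlyTopTerminal.exists_crosses_root ⟨hM, hcr⟩ hm3 hm),
      fun p hp hp2 => .inr (hcr p hp hp2)⟩

lemma removeRoot_addRoot (m : ℕ) (M : Finset (ℕ × ℕ)) : removeRoot m (addRoot m M) = M := by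
  have hroot : (1, m) ∉ M.image (Prod.map (rootShift m) (rootShift m)) := by
    simp [rootShift_ne]
  have hinv : rootUnshift m ∘ rootShift m = id := funext (rootUnshift_rootShift m)
  rw [removeRoot, addRoot, Finset.erase_insert hroot, Finset.image_image, Prod.map_comp_map, hinv,
    Prod.map_id, Finset.image_id]

end AddRoot

section Recursion

variable {n m N : ℕ} {D : Finset (ℕ × ℕ)}

lemma addRoot_removeRoot (hD : IsDiagramOn n D) (hm : (1, m) ∈ D) :
    addRoot m (removeRoot m D) = D := by
  have hm2 : 2 ≤ m := (hD.bounds hm).2.1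
  rw [addRoot, removeRoot, Finset.image_image, Finset.image_congr (g := id), Finset.image_id,
    Finset.insert_erase hm]
  intro p hp
  obtain ⟨hne, hp⟩ := Finset.mem_erase.1 hp
  have := hD.1.2 p hp _ hm hne
  have := hD.bounds hp
  simp only [Function.comp_apply, Prod.map, id]
  rw [rootShift_rootUnshift hm2 (by omega) (by omega),
    rootShift_rootUnshift hm2 (by omega) (by omega)]

lemma OnlyTopTerminal.root_mem_Icc (h : OnlyTopTerminal (N + 1) D) (hN : 1 ≤ N)
    (hm : (1, m) ∈ D) : m ∈ Set.Icc 3 (2 * N + 1) := by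
  have hm' : 1 < m ∧ m ≤ 2 * (N + 1) := (h.1.bounds hm).2
  constructor
  · by_contra hlt
    obtain ⟨q, -, hq1, hq2, -⟩ := h.2 _ hm (show m ≠ _ by omega)
    have : 1 < q.1 ∧ q.1 < m := ⟨hq1, hq2⟩
    omega
  · -- Otherwise the chord through `2N + 1` ends there, and its outgoing neighbour ends at
    -- `2N + 2`, so it is the root chord, which starts first.
    by_contra hgt
    obtain ⟨q, hq, hq'⟩ := h.1.exists_mem_of_mem_Icc (x := 2 * N + 1) (by omega) (by omega)
    have hqm : q ≠ (1, m) := by rintro rfl; simp only at hq'; omega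
    have : q.1 ≠ 1 ∧ q.2 ≠ m := ⟨(h.1.1.2 q hq _ hm hqm).1, (h.1.1.2 q hq _ hm hqm).2.2.2⟩
    have := h.1.bounds hq
    obtain ⟨s, hs, hc⟩ := h.2 q hq (by omega)
    have := h.1.bounds hs
    have hsm : s = (1, m) := h.1.1.eq_of_snd_eq hs hm (show s.2 = m by have := hc.2.2; omega)
    have := hc.1
    rw [hsm] at this
    exact absurd this (by omega)

lemma setOf_onlyTopTerminal_one : {D | OnlyTopTerminal 1 D} = {{(1, 2)}} := by
  ext D
  constructor
  · intro h
    obtain ⟨m, hm⟩ := h.1.exists_fst_eq_one le_rfl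
    have hall : ∀ p ∈ D, p = (1, 2) := fun p hp => by
      have := h.1.bounds hp
      ext <;> simp only <;> omega
    exact Finset.eq_singleton_iff_unique_mem.2 ⟨hall _ hm ▸ hm, hall⟩
  · rintro rfl
    unfold OnlyTopTerminal IsDiagramOn IsMatching points crosses
    decide

lemma ncard_onlyTopTerminal_succ (hN : 1 ≤ N) :
    {D | OnlyTopTerminal (N + 1) D}.ncard = (2 * N - 1) * {M | OnlyTopTerminal N M}.ncard := by
  have himage : Function.uncurry addRoot '' (Set.Icc 3 (2 * N + 1) ×ˢ {M | OnlyTopTerminal N M})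
      = {D | OnlyTopTerminal (N + 1) D} := by
    ext D
    constructor
    · rintro ⟨⟨m, M⟩, ⟨hm, hM⟩, rfl⟩
      exact (onlyTopTerminal_addRoot_iff hm.1 hm.2).2 hM
    · intro hD
      obtain ⟨m, hm⟩ := hD.1.exists_fst_eq_one (by omega)
      have hmI := hD.root_mem_Icc hN hm
      have hadd := addRoot_removeRoot hD.1 hm
      refine ⟨(m, removeRoot m D), ⟨hmI, ?_⟩, hadd⟩
      rw [← hadd] at hD
      exact (onlyTopTerminal_addRoot_iff hmI.1 hmI.2).1 hD
  have hinj : (Set.Icc 3 (2 * N + 1) ×ˢ {M | OnlyTopTerminal N M}).InjOn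
      (Function.uncurry addRoot) := by
    rintro ⟨m, M⟩ ⟨-, -⟩ ⟨m', M'⟩ ⟨hm', hM'⟩ (heq : addRoot m M = addRoot m' M')
    have hD := (onlyTopTerminal_addRoot_iff hm'.1 hm'.2).2 hM'
    have hroot : ((1, m) : ℕ × ℕ) = (1, m') :=
      hD.1.1.eq_of_fst_eq (heq ▸ Finset.mem_insert_self _ _) (Finset.mem_insert_self _ _) rfl
    obtain rfl : m = m' := (Prod.mk.inj hroot).2
    rw [← removeRoot_addRoot m M, heq, removeRoot_addRoot]
  rw [← himage, hinj.ncard_image, Set.ncard_prod, Set.ncard_Icc_nat,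
    show 2 * N + 1 + 1 - 3 = 2 * N - 1 by omega]

lemma ncard_onlyTopTerminal (hn : 1 ≤ n) :
    {D | OnlyTopTerminal n D}.ncard = ∏ i ∈ Finset.range (n - 1), (2 * i + 1) := by
  induction n, hn using Nat.le_induction with
  | base => simp [setOf_onlyTopTerminal_one]
  | succ N hN ih =>
    obtain ⟨k, rfl⟩ := Nat.exists_eq_add_of_le' hN
    rw [ncard_onlyTopTerminal_succ hN, ih, Nat.add_sub_cancel, Nat.add_sub_cancel,
      Finset.prod_range_succ, mul_comm, show 2 * (k + 1) - 1 = 2 * k + 1 by omega]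

end Recursion

/-- the number of connected chord diagrams with `n` chords having exactly
one terminal chord is `(2n-3)!! = 1·3·5⋯(2n-3)` (with `(-1)!! = 1`). -/
theorem stmt6 (n : ℕ) (hn : 1 ≤ n) :
    Set.ncard {D : Finset (ℕ × ℕ) |
        IsDiagramOn n D ∧ ConnectedDiagram D ∧ ∃! p, IsTerminal D p}
      = ∏ i ∈ Finset.range (n - 1), (2 * i + 1) := by
  rw [setOf_existsUnique_isTerminal hn, ncard_onlyTopTerminal hn]

end ChordStmt
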